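/- arXiv:2601.15796 — 8 statements merged into one kernel-verified Lean document; each statement's English description precedes it below -/
import Mathlib

section
/- If a1² = 4a2 with a1 > 0, then for the matrix A = [[0,1],[-a2,-a1]] and any t ≥ 0, one has [1,0]·exp(tA)·[0,1]ᵀ = t·e^{-a1 t/2}. -/
/-! The double eigenvalue `-a1/2` makes `N := A + (a1/2) I` square to zero, so
`exp (t A) = e^{-a1 t/2} exp (t N) = e^{-a1 t/2} (I + t N)`, and the `(0,1)` entry of `N` is `1`. -/

open NormedSpace

theorem NormedSpace.exp_eq_one_add_of_sq_eq_zero {𝔸 : Type*} [Ring 𝔸] [Algebra ℚ 𝔸]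
    [TopologicalSpace 𝔸] [IsTopologicalRing 𝔸] [T2Space 𝔸] {x : 𝔸} (h : x ^ 2 = 0) :
    exp x = 1 + x := by
  have hvanish : ∀ n ∉ Finset.range 2, ((n.factorial : ℚ)⁻¹) • x ^ n = 0 := by
    intro n hn
    obtain ⟨k, rfl⟩ := Nat.exists_eq_add_of_le (not_lt.mp (Finset.mem_range.not.mp hn))
    rw [pow_add, h, zero_mul, smul_zero]
  rw [congrFun exp_eq_tsum_rat x, tsum_eq_sum hvanish]
  simp [Finset.sum_range_succ]

theorem Matrix.exp_smul_one_add_of_sq_eq_zero {m : Type*} [Fintype m] [DecidableEq m]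
    (c : ℝ) {N : Matrix m m ℝ} (hN : N ^ 2 = 0) :
    exp (c • (1 : Matrix m m ℝ) + N) = Real.exp c • (1 + N) := by
  have hscalar : exp (c • (1 : Matrix m m ℝ)) = Real.exp c • 1 := by
    rw [smul_one_eq_diagonal, exp_diagonal, Pi.exp_def, smul_one_eq_diagonal, Real.exp_eq_exp_ℝ]
  rw [exp_add_of_commute _ _ ((Commute.one_left N).smul_left c), hscalar,
    exp_eq_one_add_of_sq_eq_zero hN, smul_one_mul]

theorem stmt1_general (a1 a2 t : ℝ) (ha2 : a1 ^ 2 = 4 * a2) :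
    (NormedSpace.exp (t • !![(0 : ℝ), 1; -a2, -a1])) 0 1 = t * Real.exp (-a1 * t / 2) := by
  set N : Matrix (Fin 2) (Fin 2) ℝ := !![a1 / 2, 1; -a2, -a1 / 2]
  have hN : N ^ 2 = 0 := by
    ext i j
    fin_cases i <;> fin_cases j <;> simp [N, sq, Matrix.mul_apply] <;> nlinarith
  have hsplit : t • !![(0 : ℝ), 1; -a2, -a1] = (-a1 * t / 2) • (1 : Matrix _ _ ℝ) + t • N := by
    ext i j
    fin_cases i <;> fin_cases j <;> simp [N] <;> ring
  rw [hsplit, Matrix.exp_smul_one_add_of_sq_eq_zero _ (by rw [smul_pow, hN, smul_zero])]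
  simp [N, mul_comm]

theorem stmt1 (a1 a2 t : ℝ) (ha1 : 0 < a1) (ha2 : a1 ^ 2 = 4 * a2) (ht : 0 ≤ t) :
    (NormedSpace.exp (t • !![(0 : ℝ), 1; -a2, -a1])) 0 1 = t * Real.exp (-a1 * t / 2) :=
  stmt1_general a1 a2 t ha2
end

section
/- For 0 < p, λ > 0 and 0 < θ < 1, one has ∫₀^∞ (e^{-λθs} - e^{-λs})^p ds = λ^{-1}(1-θ)^{-1} B(pθ/(1-θ), p+1), where B denotes the Beta function. -/
open MeasureTheory

/-- The Beta function `B(x,y) = Γ(x)Γ(y)/Γ(x+y)`. -/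
noncomputable def realBeta (x y : ℝ) : ℝ :=
  Real.Gamma x * Real.Gamma y / Real.Gamma (x + y)

/-!
Substituting `x = exp (-(ν - μ) s)` maps `(0, ∞)` onto `(0, 1)`, and
`exp (-μ s) - exp (-ν s) = x ^ (μ / (ν - μ)) * (1 - x)`, so the integral becomes the Beta integral
`(ν - μ)⁻¹ ∫₀¹ x ^ (p μ / (ν - μ) - 1) (1 - x) ^ p dx`; take `μ = λθ`, `ν = λ`.
-/

open Real Set

theorem realBeta_eq_integral {a b : ℝ} (ha : 0 < a) (hb : 0 < b) :
    realBeta a b = ∫ x in Ioo (0 : ℝ) 1, x ^ (a - 1) * (1 - x) ^ (b - 1) := by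
  have hbeta : Complex.betaIntegral a b
      = ↑(∫ x in (0 : ℝ)..1, x ^ (a - 1) * (1 - x) ^ (b - 1)) := by
    rw [Complex.betaIntegral, ← intervalIntegral.integral_ofReal]
    refine intervalIntegral.integral_congr fun x hx => ?_
    rw [uIcc_of_le zero_le_one] at hx
    push_cast
    rw [Complex.ofReal_cpow hx.1, Complex.ofReal_cpow (sub_nonneg.2 hx.2)]
    push_cast
    ring
  have hGamma := Complex.Gamma_mul_Gamma_eq_betaIntegral
    (s := (a : ℂ)) (t := (b : ℂ)) (by simpa using ha) (by simpa using hb)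
  rw [hbeta, ← Complex.ofReal_add, Complex.Gamma_ofReal, Complex.Gamma_ofReal,
    Complex.Gamma_ofReal, ← Complex.ofReal_mul, ← Complex.ofReal_mul] at hGamma
  rw [← integral_Ioc_eq_integral_Ioo, ← intervalIntegral.integral_of_le zero_le_one, realBeta,
    div_eq_iff (Gamma_pos_of_pos (add_pos ha hb)).ne', Complex.ofReal_injective hGamma, mul_comm]

theorem image_exp_neg_mul_Ioi_zero {c : ℝ} (hc : 0 < c) :
    (fun s => exp (-c * s)) '' Ioi 0 = Ioo 0 1 := by
  have hcomp : (fun s => exp (-c * s)) = exp ∘ Neg.neg ∘ (c * ·) := by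
    funext s; simp only [Function.comp_apply, neg_mul]
  rw [hcomp, image_comp, image_comp, image_mul_left_Ioi hc, mul_zero, image_neg_Ioi, neg_zero,
    image_exp_Iio, exp_zero]

theorem integral_comp_exp_neg_mul_Ioi {E : Type*} [NormedAddCommGroup E] [NormedSpace ℝ E]
    (g : ℝ → E) {c : ℝ} (hc : 0 < c) :
    ∫ s in Ioi 0, (c * exp (-c * s)) • g (exp (-c * s)) = ∫ x in Ioo 0 1, g x := by
  have hderiv (s : ℝ) : HasDerivAt (fun s => exp (-c * s)) (exp (-c * s) * -c) s := by
    simpa using ((hasDerivAt_id s).const_mul (-c)).exp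
  have hinj : InjOn (fun s => exp (-c * s)) (Ioi 0) := fun x _ y _ h =>
    mul_left_cancel₀ (neg_ne_zero.2 hc.ne') (exp_injective h)
  rw [← image_exp_neg_mul_Ioi_zero hc, integral_image_eq_integral_abs_deriv_smul measurableSet_Ioi
    (fun s _ => (hderiv s).hasDerivWithinAt) hinj]
  refine setIntegral_congr_fun measurableSet_Ioi fun s _ => ?_
  rw [abs_mul, abs_neg, abs_of_pos (exp_pos _), abs_of_pos hc, mul_comm]

theorem exp_neg_mul_sub_exp_neg_mul_rpow {μ ν p s : ℝ} (hμν : μ < ν) (hs : 0 ≤ s) :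
    (exp (-μ * s) - exp (-ν * s)) ^ p
      = exp (-(ν - μ) * s) * (exp (-(ν - μ) * s) ^ (p * μ / (ν - μ) - 1)
          * (1 - exp (-(ν - μ) * s)) ^ p) := by
  have hc : ν - μ ≠ 0 := (sub_pos.2 hμν).ne'
  have hfactor : exp (-μ * s) - exp (-ν * s) = exp (-μ * s) * (1 - exp (-(ν - μ) * s)) := by
    rw [mul_sub, mul_one, ← exp_add]; ring_nf
  have hpow : exp (-(ν - μ) * s) * exp (-(ν - μ) * s) ^ (p * μ / (ν - μ) - 1)
      = exp (-μ * s) ^ p := by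
    rw [← exp_mul, ← exp_mul, ← exp_add]; congr 1; field_simp; ring
  have hle : 0 ≤ 1 - exp (-(ν - μ) * s) :=
    sub_nonneg.2 (exp_le_one_iff.2 (mul_nonpos_of_nonpos_of_nonneg (by linarith) hs))
  rw [← mul_assoc, hpow, hfactor, mul_rpow (exp_pos _).le hle]

theorem integral_exp_neg_mul_sub_exp_neg_mul_rpow {μ ν p : ℝ} (hp : 0 < p) (hμ : 0 < μ)
    (hμν : μ < ν) :
    ∫ s in Ioi 0, (exp (-μ * s) - exp (-ν * s)) ^ p
      = (ν - μ)⁻¹ * realBeta (p * μ / (ν - μ)) (p + 1) := by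
  have hc : 0 < ν - μ := sub_pos.2 hμν
  rw [realBeta_eq_integral (by positivity) (by positivity), add_sub_cancel_right,
    ← integral_comp_exp_neg_mul_Ioi _ hc, ← integral_const_mul]
  refine setIntegral_congr_fun measurableSet_Ioi fun s hs => ?_
  rw [exp_neg_mul_sub_exp_neg_mul_rpow hμν (le_of_lt hs), smul_eq_mul,
    mul_assoc (ν - μ), inv_mul_cancel_left₀ hc.ne']

theorem stmt8 (p lam θ : ℝ) (hp : 0 < p) (hlam : 0 < lam) (hθ : θ ∈ Set.Ioo (0 : ℝ) 1) :
    ∫ s in Set.Ioi (0 : ℝ), (Real.exp (-lam * θ * s) - Real.exp (-lam * s)) ^ p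
      = lam⁻¹ * (1 - θ)⁻¹ * realBeta (p * θ / (1 - θ)) (p + 1) := by
  obtain ⟨hθ0, hθ1⟩ := hθ
  have hlamθ : lam * θ < lam := mul_lt_of_lt_one_right hlam hθ1
  have h := integral_exp_neg_mul_sub_exp_neg_mul_rpow hp (mul_pos hlam hθ0) hlamθ
  have hsub : lam - lam * θ = lam * (1 - θ) := by ring
  have hexponent : p * (lam * θ) / (lam * (1 - θ)) = p * θ / (1 - θ) := by
    field_simp
  rw [hsub, hexponent, mul_inv] at h
  simpa only [neg_mul] using h
end

section
/- For each p > 0 there exists a constant C_p < ∞ such that for all λ > 0 and θ ∈ (0,1): ∫₀^∞ ((e^{-λθs} - e^{-λs})/(λ(1-θ)))^p ds ≤ C_p / (λ^{p+1} θ). -/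
/-! Writing f(λ, θ, s) = e^{-λθs} (1 - e^{-λ(1-θ)s}) / (λ(1-θ)) gives the two pointwise bounds
f ≤ e^{-λθs} / (λ(1-θ)) and f ≤ s e^{-λθs}. For θ ≤ 1/2 the first one is at most (2/λ) e^{-λθs},
whose p-th power integrates to 2^p / (p λ^{p+1} θ); for θ ≥ 1/2 the second one is at most
s e^{-λs/2}, whose p-th power is a Gamma integral of size (2/p)^{p+1} Γ(p+1) / λ^{p+1}. -/

open MeasureTheory Real Set

theorem integral_rpow_le_of_le_mul_rpow_mul_exp {f : ℝ → ℝ} {p a b c : ℝ} (hp : 0 < p)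
    (ha : 0 ≤ a) (hb : 0 < b) (hc : 0 ≤ c) (hf₀ : ∀ s ∈ Ioi (0 : ℝ), 0 ≤ f s)
    (hf : ∀ s ∈ Ioi (0 : ℝ), f s ≤ c * s ^ a * exp (-(b * s))) :
    ∫ s in Ioi 0, f s ^ p ≤ c ^ p * ((1 / (p * b)) ^ (a * p + 1) * Gamma (a * p + 1)) := by
  have hgamma := integral_rpow_mul_exp_neg_mul_Ioi (by positivity : 0 < a * p + 1)
    (mul_pos hp hb)
  rw [add_sub_cancel_right] at hgamma
  have hint : IntegrableOn (fun s ↦ s ^ (a * p) * exp (-(p * b * s))) (Ioi 0) :=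
    .of_integral_ne_zero (by rw [hgamma]; positivity)
  rw [← hgamma, ← integral_const_mul]
  refine integral_mono_of_nonneg ?_ (hint.const_mul _) ?_ <;>
    filter_upwards [ae_restrict_mem measurableSet_Ioi] with s hs
  · exact rpow_nonneg (hf₀ s hs) p
  · calc f s ^ p ≤ (c * s ^ a * exp (-(b * s))) ^ p := rpow_le_rpow (hf₀ s hs) (hf s hs) hp.le
      _ = c ^ p * (s ^ (a * p) * exp (-(p * b * s))) := by
        have hs : 0 ≤ s := le_of_lt hs
        rw [mul_rpow (by positivity) (exp_pos _).le, mul_rpow hc (by positivity),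
          ← rpow_mul hs, ← exp_mul]
        ring_nf

/-- The type II supCAR(2) kernel `f(λ, θ, s)`. -/
noncomputable def supCar2Kernel (lam θ s : ℝ) : ℝ :=
  (exp (-lam * θ * s) - exp (-lam * s)) / (lam * (1 - θ))

section supCar2Kernel

variable {lam θ s : ℝ}

theorem supCar2Kernel_nonneg (hlam : 0 ≤ lam) (hθ : θ ≤ 1) (hs : 0 ≤ s) :
    0 ≤ supCar2Kernel lam θ s := by
  refine div_nonneg (sub_nonneg.2 (exp_le_exp.2 ?_)) (mul_nonneg hlam (sub_nonneg.2 hθ))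
  nlinarith [mul_nonneg hlam hs]

theorem supCar2Kernel_le_exp_div (hlam : 0 ≤ lam) (hθ : θ ≤ 1) :
    supCar2Kernel lam θ s ≤ exp (-lam * θ * s) / (lam * (1 - θ)) :=
  div_le_div_of_nonneg_right (sub_le_self _ (exp_pos _).le) (mul_nonneg hlam (sub_nonneg.2 hθ))

theorem supCar2Kernel_le_mul_exp (hlam : 0 < lam) (hθ : θ < 1) :
    supCar2Kernel lam θ s ≤ s * exp (-lam * θ * s) := by
  have hden : 0 < lam * (1 - θ) := mul_pos hlam (sub_pos.2 hθ)
  have hsplit : exp (-lam * s) = exp (-lam * θ * s) * exp (-(lam * (1 - θ) * s)) := by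
    rw [← exp_add]; ring_nf
  rw [supCar2Kernel, div_le_iff₀ hden, hsplit]
  nlinarith [add_one_le_exp (-(lam * (1 - θ) * s)), exp_pos (-lam * θ * s)]

theorem integral_supCar2Kernel_rpow_le_of_le_half {p : ℝ} (hp : 0 < p) (hlam : 0 < lam)
    (hθ₀ : 0 < θ) (hθ : θ ≤ 1 / 2) :
    ∫ s in Ioi 0, supCar2Kernel lam θ s ^ p ≤ 2 ^ p / p / (lam ^ (p + 1) * θ) := by
  have hbound : ∀ s ∈ Ioi (0 : ℝ),
      supCar2Kernel lam θ s ≤ 2 / lam * s ^ (0 : ℝ) * exp (-(lam * θ * s)) := fun s _ ↦ by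
    calc supCar2Kernel lam θ s ≤ exp (-lam * θ * s) / (lam * (1 - θ)) :=
          supCar2Kernel_le_exp_div hlam.le (by linarith)
      _ ≤ exp (-lam * θ * s) / (lam / 2) := by gcongr; nlinarith
      _ = 2 / lam * s ^ (0 : ℝ) * exp (-(lam * θ * s)) := by
          rw [rpow_zero]; field_simp
  calc ∫ s in Ioi 0, supCar2Kernel lam θ s ^ p
      ≤ (2 / lam) ^ p * ((1 / (p * (lam * θ))) ^ (0 * p + 1) * Gamma (0 * p + 1)) :=
        integral_rpow_le_of_le_mul_rpow_mul_exp hp le_rfl (by positivity) (by positivity)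
          (fun s hs ↦ supCar2Kernel_nonneg hlam.le (by linarith) (le_of_lt hs)) hbound
    _ = 2 ^ p / p / (lam ^ (p + 1) * θ) := by
        rw [zero_mul, zero_add, rpow_one, Gamma_one, div_rpow zero_le_two hlam.le,
          rpow_add_one hlam.ne']
        field_simp

theorem integral_supCar2Kernel_rpow_le_of_half_le {p : ℝ} (hp : 0 < p) (hlam : 0 < lam)
    (hθ : 1 / 2 ≤ θ) (hθ₁ : θ < 1) :
    ∫ s in Ioi 0, supCar2Kernel lam θ s ^ p ≤
      (2 / p) ^ (p + 1) * Gamma (p + 1) / lam ^ (p + 1) := by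
  have hbound : ∀ s ∈ Ioi (0 : ℝ),
      supCar2Kernel lam θ s ≤ 1 * s ^ (1 : ℝ) * exp (-(lam / 2 * s)) := fun s hs ↦ by
    have hs : 0 < s := hs
    calc supCar2Kernel lam θ s ≤ s * exp (-lam * θ * s) := supCar2Kernel_le_mul_exp hlam hθ₁
      _ ≤ s * exp (-(lam / 2 * s)) := by gcongr; nlinarith [mul_pos hlam hs]
      _ = 1 * s ^ (1 : ℝ) * exp (-(lam / 2 * s)) := by rw [rpow_one, one_mul]
  calc ∫ s in Ioi 0, supCar2Kernel lam θ s ^ p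
      ≤ 1 ^ p * ((1 / (p * (lam / 2))) ^ (1 * p + 1) * Gamma (1 * p + 1)) :=
        integral_rpow_le_of_le_mul_rpow_mul_exp hp zero_le_one (by positivity) zero_le_one
          (fun s hs ↦ supCar2Kernel_nonneg hlam.le hθ₁.le (le_of_lt hs)) hbound
    _ = (2 / p) ^ (p + 1) * Gamma (p + 1) / lam ^ (p + 1) := by
        rw [one_rpow, one_mul, one_mul, mul_div_right_comm, ← div_rpow (by positivity) hlam.le]
        congr 2
        field_simp

end supCar2Kernel

theorem stmt9 (p : ℝ) (hp : 0 < p) :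
    ∃ C : ℝ, ∀ lam θ : ℝ, 0 < lam → θ ∈ Set.Ioo (0 : ℝ) 1 →
      ∫ s in Set.Ioi (0 : ℝ),
          ((Real.exp (-lam * θ * s) - Real.exp (-lam * s)) / (lam * (1 - θ))) ^ p
        ≤ C / (lam ^ (p + 1) * θ) := by
  refine ⟨2 ^ p / p + (2 / p) ^ (p + 1) * Gamma (p + 1), fun lam θ hlam ⟨hθ₀, hθ₁⟩ ↦ ?_⟩
  change ∫ s in Ioi 0, supCar2Kernel lam θ s ^ p ≤ _
  have hsmall : 0 ≤ 2 ^ p / p := by positivity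
  have hlarge : 0 ≤ (2 / p) ^ (p + 1) * Gamma (p + 1) := by positivity
  rcases le_total θ (1 / 2) with hθ | hθ
  · calc ∫ s in Ioi 0, supCar2Kernel lam θ s ^ p ≤ 2 ^ p / p / (lam ^ (p + 1) * θ) :=
          integral_supCar2Kernel_rpow_le_of_le_half hp hlam hθ₀ hθ
      _ ≤ _ := by gcongr; exact le_add_of_nonneg_right hlarge
  · calc ∫ s in Ioi 0, supCar2Kernel lam θ s ^ p
        ≤ (2 / p) ^ (p + 1) * Gamma (p + 1) / lam ^ (p + 1) :=
          integral_supCar2Kernel_rpow_le_of_half_le hp hlam hθ hθ₁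
      _ ≤ (2 / p) ^ (p + 1) * Gamma (p + 1) / (lam ^ (p + 1) * θ) := by
          gcongr; exact mul_le_of_le_one_right (by positivity) hθ₁.le
      _ ≤ _ := by gcongr; exact le_add_of_nonneg_left hsmall
end

section
/- For λ > 0, θ ∈ (0,1) and τ ≥ 0: ∫₀^∞ ((e^{-λθ(s+τ)} - e^{-λ(s+τ)})/(λ(1-θ))) · ((e^{-λθs} - e^{-λs})/(λ(1-θ))) ds = (1/(2λ³(1-θ²)))·(e^{-λθτ}/θ − e^{-λτ}). -/
/-!
Both factors are differences of two decaying exponentials, so the integrand splits into four terms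
`e^{aτ} e^{(a + c) s}`, each integrating over `(0, ∞)` to `-e^{aτ} / (a + c)`; the closed form is
the resulting rational expression in `λ, θ` simplified.
-/

open MeasureTheory Real Set

lemma exp_shift_mul_exp (a c τ s : ℝ) :
    exp (a * (s + τ)) * exp (c * s) = exp (a * τ) * exp ((a + c) * s) := by
  rw [← exp_add, ← exp_add]
  ring_nf

lemma integrableOn_exp_shift_mul_exp {a c : ℝ} (hac : a + c < 0) (τ : ℝ) :
    IntegrableOn (fun s => exp (a * (s + τ)) * exp (c * s)) (Ioi 0) := by
  simp_rw [exp_shift_mul_exp]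
  exact (integrableOn_exp_mul_Ioi hac 0).const_mul _

lemma integral_exp_shift_mul_exp {a c : ℝ} (hac : a + c < 0) (τ : ℝ) :
    ∫ s in Ioi (0 : ℝ), exp (a * (s + τ)) * exp (c * s) = -exp (a * τ) / (a + c) := by
  simp_rw [exp_shift_mul_exp]
  rw [integral_const_mul, integral_exp_mul_Ioi hac, mul_zero, exp_zero]
  ring

lemma integral_sub_exp_shift_mul_sub_exp {a b c d : ℝ} (hac : a + c < 0) (had : a + d < 0)
    (hbc : b + c < 0) (hbd : b + d < 0) (τ : ℝ) :
    ∫ s in Ioi (0 : ℝ), (exp (a * (s + τ)) - exp (b * (s + τ))) * (exp (c * s) - exp (d * s)) =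
      exp (b * τ) * (1 / (b + c) - 1 / (b + d)) - exp (a * τ) * (1 / (a + c) - 1 / (a + d)) := by
  simp_rw [sub_mul, mul_sub]
  rw [integral_sub, integral_sub, integral_sub,
    integral_exp_shift_mul_exp hac, integral_exp_shift_mul_exp had,
    integral_exp_shift_mul_exp hbc, integral_exp_shift_mul_exp hbd]
  · ring
  all_goals first
    | exact integrableOn_exp_shift_mul_exp ‹_› τ
    | exact (integrableOn_exp_shift_mul_exp ‹_› τ).sub (integrableOn_exp_shift_mul_exp ‹_› τ)

theorem stmt10_general (lam θ τ : ℝ) (hlam : 0 < lam) (hθ : θ ∈ Set.Ioo (0 : ℝ) 1) :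
    ∫ s in Set.Ioi (0 : ℝ),
        ((Real.exp (-lam * θ * (s + τ)) - Real.exp (-lam * (s + τ))) / (lam * (1 - θ))) *
          ((Real.exp (-lam * θ * s) - Real.exp (-lam * s)) / (lam * (1 - θ)))
      = 1 / (2 * lam ^ 3 * (1 - θ ^ 2)) * (Real.exp (-lam * θ * τ) / θ - Real.exp (-lam * τ)) := by
  obtain ⟨hθ0, hθ1⟩ := hθ
  have hθθ : -lam * θ + -lam * θ < 0 := by nlinarith
  have hθ1' : -lam * θ + -lam < 0 := by nlinarith
  have h1θ : -lam + -lam * θ < 0 := by nlinarith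
  have h11 : -lam + -lam < 0 := by linarith
  simp_rw [div_mul_div_comm]
  rw [integral_div, integral_sub_exp_shift_mul_sub_exp hθθ hθ1' h1θ h11,
    show -lam * θ + -lam = -lam * (1 + θ) by ring, show -lam + -lam * θ = -lam * (1 + θ) by ring]
  have : 1 - θ ≠ 0 := by linarith
  have : 1 + θ ≠ 0 := by linarith
  have : 1 - θ ^ 2 ≠ 0 := by nlinarith
  field_simp
  ring

theorem stmt10 (lam θ τ : ℝ) (hlam : 0 < lam) (hθ : θ ∈ Set.Ioo (0 : ℝ) 1) (hτ : 0 ≤ τ) :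
    ∫ s in Set.Ioi (0 : ℝ),
        ((Real.exp (-lam * θ * (s + τ)) - Real.exp (-lam * (s + τ))) / (lam * (1 - θ))) *
          ((Real.exp (-lam * θ * s) - Real.exp (-lam * s)) / (lam * (1 - θ)))
      = 1 / (2 * lam ^ 3 * (1 - θ ^ 2)) * (Real.exp (-lam * θ * τ) / θ - Real.exp (-lam * τ)) :=
  stmt10_general lam θ τ hlam hθ
end

section
/- For every p > 0 there exists C_p < ∞ such that for all r > 0 and ψ ∈ (π/2, π): ∫₀^∞ (e^{r s cos ψ}/(r sin ψ))^p |sin(r s sin ψ)|^p ds ≤ C_p/(r^{p+1}|cos ψ|). -/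
/-!
Where `sin ψ ≥ 1/2` the factor `|sin (r s sin ψ)| / (r sin ψ)` is at most `2 / r`; elsewhere
`|cos ψ| ≥ 1/2`, and `|sin (r s sin ψ)| ≤ r s sin ψ` lets half of the decay `e^{r s cos ψ}` absorb
the factor `s`. Either way the kernel is at most `(2 / r) e^{r s cos ψ / 2}`, whose `p`-th power
integrates to `2^{p+1} / (p r^{p+1} |cos ψ|)`.
-/

open MeasureTheory Real

lemma le_two_mul_exp_div_four {u : ℝ} (hu : 0 ≤ u) : u ≤ 2 * exp (u / 4) := by
  have h : u / 8 + 1 ≤ exp (u / 8) := add_one_le_exp (u / 8)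
  have hsq : exp (u / 4) = exp (u / 8) * exp (u / 8) := by rw [← exp_add]; ring_nf
  nlinarith [exp_pos (u / 8), sq_nonneg (u - 8)]

lemma abs_sin_mul_sin_le {x ψ : ℝ} (hx : 0 ≤ x) (hsin : 0 ≤ sin ψ) :
    |sin (x * sin ψ)| ≤ 2 * sin ψ * exp (x * |cos ψ| / 2) := by
  have hexp : 1 ≤ exp (x * |cos ψ| / 2) := one_le_exp (by positivity)
  rcases le_or_gt (1 / 2) (sin ψ) with hbig | hsmall
  · nlinarith [abs_sin_le_one (x * sin ψ)]
  · have hcos : 1 / 2 ≤ |cos ψ| := by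
      nlinarith [sin_sq_add_cos_sq ψ, sq_abs (cos ψ), abs_nonneg (cos ψ)]
    calc |sin (x * sin ψ)| ≤ x * sin ψ := by
          simpa [abs_of_nonneg (mul_nonneg hx hsin)] using abs_sin_le_abs (x := x * sin ψ)
      _ ≤ 2 * exp (x / 4) * sin ψ :=
          mul_le_mul_of_nonneg_right (le_two_mul_exp_div_four hx) hsin
      _ ≤ 2 * sin ψ * exp (x * |cos ψ| / 2) := by
          have : exp (x / 4) ≤ exp (x * |cos ψ| / 2) := exp_le_exp.2 (by nlinarith)
          nlinarith

lemma sin_pos_and_cos_neg {ψ : ℝ} (hψ : ψ ∈ Set.Ioo (π / 2) π) : 0 < sin ψ ∧ cos ψ < 0 :=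
  ⟨sin_pos_of_pos_of_lt_pi (by linarith [hψ.1, pi_pos]) hψ.2,
    cos_neg_of_pi_div_two_lt_of_lt hψ.1 (by linarith [hψ.2, pi_pos])⟩

lemma exp_div_mul_abs_sin_le {r s ψ : ℝ} (hr : 0 < r) (hs : 0 ≤ s)
    (hψ : ψ ∈ Set.Ioo (π / 2) π) :
    exp (r * s * cos ψ) / (r * sin ψ) * |sin (r * s * sin ψ)|
      ≤ 2 / r * exp (r * s * cos ψ / 2) := by
  obtain ⟨hsin, hcos⟩ := sin_pos_and_cos_neg hψ
  have hbound := abs_sin_mul_sin_le (x := r * s) (by positivity) hsin.le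
  rw [abs_of_neg hcos] at hbound
  have hhalf : exp (r * s * cos ψ) * exp (r * s * -cos ψ / 2) = exp (r * s * cos ψ / 2) := by
    rw [← exp_add]; ring_nf
  rw [div_mul_eq_mul_div, div_le_iff₀ (by positivity)]
  calc exp (r * s * cos ψ) * |sin (r * s * sin ψ)|
      ≤ exp (r * s * cos ψ) * (2 * sin ψ * exp (r * s * -cos ψ / 2)) :=
        mul_le_mul_of_nonneg_left hbound (exp_pos _).le
    _ = 2 / r * exp (r * s * cos ψ / 2) * (r * sin ψ) := by
        rw [← hhalf]
        field_simp

lemma rpow_exp_div_mul_rpow_abs_sin_le {p r s ψ : ℝ} (hp : 0 ≤ p) (hr : 0 < r) (hs : 0 ≤ s)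
    (hψ : ψ ∈ Set.Ioo (π / 2) π) :
    (exp (r * s * cos ψ) / (r * sin ψ)) ^ p * |sin (r * s * sin ψ)| ^ p
      ≤ (2 / r) ^ p * exp (p * r * cos ψ / 2 * s) := by
  have hsin := (sin_pos_and_cos_neg hψ).1
  rw [← mul_rpow (by positivity) (abs_nonneg _)]
  calc _ ≤ (2 / r * exp (r * s * cos ψ / 2)) ^ p :=
        rpow_le_rpow (by positivity) (exp_div_mul_abs_sin_le hr hs hψ) hp
    _ = _ := by rw [mul_rpow (by positivity) (exp_pos _).le, ← exp_mul]; ring_nf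

theorem stmt13 (p : ℝ) (hp : 0 < p) :
    ∃ C : ℝ, ∀ r ψ : ℝ, 0 < r → ψ ∈ Set.Ioo (π / 2) π →
      ∫ s in Set.Ioi (0 : ℝ),
          (Real.exp (r * s * Real.cos ψ) / (r * Real.sin ψ)) ^ p *
            |Real.sin (r * s * Real.sin ψ)| ^ p
        ≤ C / (r ^ (p + 1) * |Real.cos ψ|) := by
  refine ⟨2 ^ (p + 1) / p, fun r ψ hr hψ => ?_⟩
  obtain ⟨hsin, hcos⟩ := sin_pos_and_cos_neg hψ
  have ha : p * r * cos ψ / 2 < 0 := by nlinarith [mul_pos hp hr]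
  calc _ ≤ ∫ s in Set.Ioi (0 : ℝ), (2 / r) ^ p * exp (p * r * cos ψ / 2 * s) :=
        setIntegral_mono_of_nonneg (fun s _ => by positivity)
          (fun s hs => rpow_exp_div_mul_rpow_abs_sin_le hp.le hr (le_of_lt hs) hψ)
          ((integrableOn_exp_mul_Ioi ha 0).const_mul _)
    _ = 2 ^ (p + 1) / p / (r ^ (p + 1) * |cos ψ|) := by
        rw [integral_const_mul, integral_exp_mul_Ioi ha, abs_of_neg hcos,
          div_rpow zero_le_two hr.le, rpow_add_one two_ne_zero, rpow_add_one hr.ne']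
        have : 0 < r ^ p := rpow_pos_of_pos hr p
        rw [mul_zero, exp_zero]
        field_simp
end

section
/- For r > 0 and ψ ∈ (π/2,π): ∫₀^∞ e^{r s cos ψ} |sin(r s sin ψ)|/(r sin ψ) ds = r^{-2} coth(π|cot ψ|/2). -/
open MeasureTheory
open scoped Real

/-- The hyperbolic cotangent. -/
noncomputable def realCoth (x : ℝ) : ℝ := Real.cosh x / Real.sinh x

/-!
Substituting `u = r s sin ψ` turns the integral into `(r sin ψ)⁻² I` with
`I = ∫₀^∞ e^{-pu} |sin u| du` and `p = -cot ψ = |cot ψ| > 0`. A shift by the half-period `π`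
multiplies `e^{-pu} |sin u|` by `q = e^{-pπ}`, so the integral over `(π, ∞)` is `q I` and
`I = J + q I`, where `J = ∫₀^π e^{-pu} sin u du = (1 + q) / (p² + 1)`. Finally
`(1 + q) / (1 - q) = coth (π p / 2)` and `(r sin ψ)² (p² + 1) = r²`.
-/

open Set Real

theorem realCoth_eq (x : ℝ) : realCoth x = (1 + exp (-2 * x)) / (1 - exp (-2 * x)) := by
  have hx : exp (-x) ≠ 0 := (exp_pos _).ne'
  rw [realCoth, cosh_eq, sinh_eq, div_div_div_cancel_right₀ two_ne_zero,
    ← mul_div_mul_right _ _ hx]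
  congr 1 <;> simp only [add_mul, sub_mul, ← exp_add, add_neg_cancel, exp_zero] <;> ring_nf

theorem setIntegral_Ioi_add_right {f : ℝ → ℝ} (a T : ℝ) :
    ∫ u in Ioi (a + T), f u = ∫ u in Ioi a, f (u + T) := by
  rw [← (measurePreserving_add_right volume T).setIntegral_preimage_emb
    (measurableEmbedding_addRight T), preimage_add_const_Ioi, add_sub_cancel_right]

theorem integral_Ioi_eq_div_of_add_eq_mul {f : ℝ → ℝ} {a T q : ℝ} (hT : 0 ≤ T)
    (hq : q ≠ 1) (hf : IntegrableOn f (Ioi a)) (hshift : ∀ u, f (u + T) = q * f u) :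
    ∫ u in Ioi a, f u = (∫ u in a..a + T, f u) / (1 - q) := by
  have hsplit := intervalIntegral.integral_Ioi_sub_Ioi hf (le_add_of_nonneg_right hT)
  rw [setIntegral_Ioi_add_right, funext hshift, integral_const_mul] at hsplit
  rw [eq_div_iff (sub_ne_zero.mpr hq.symm), ← hsplit]
  ring

theorem integral_exp_neg_mul_sin_zero_pi (p : ℝ) :
    ∫ u in (0)..π, exp (-p * u) * sin u = (1 + exp (-p * π)) / (p ^ 2 + 1) := by
  have hden : p ^ 2 + 1 ≠ 0 := by positivity
  have hderiv : ∀ u, HasDerivAt (fun u => -exp (-p * u) * (p * sin u + cos u) / (p ^ 2 + 1))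
      (exp (-p * u) * sin u) u := by
    intro u
    have hexp : HasDerivAt (fun u => exp (-p * u)) (exp (-p * u) * -p) u := by
      simpa using ((hasDerivAt_id u).const_mul (-p)).exp
    refine (((hexp.neg).mul (((hasDerivAt_sin u).const_mul p).add
      (hasDerivAt_cos u))).div_const (p ^ 2 + 1)).congr_deriv ?_
    simp only [Pi.add_apply, Pi.neg_apply]
    field_simp
    ring
  rw [intervalIntegral.integral_eq_sub_of_hasDerivAt (fun u _ => hderiv u)
    (by apply Continuous.intervalIntegrable; fun_prop)]
  simp only [neg_mul, sin_pi, mul_zero, cos_pi, zero_add, mul_neg, mul_one, neg_neg, exp_zero,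
    sin_zero, cos_zero]
  field_simp
  ring

theorem integral_Ioi_exp_neg_mul_abs_sin {p : ℝ} (hp : 0 < p) :
    ∫ u in Ioi 0, exp (-p * u) * |sin u| = realCoth (π * p / 2) / (p ^ 2 + 1) := by
  have hq : exp (-p * π) < 1 := exp_lt_one_iff.mpr (by nlinarith [pi_pos])
  have hf : IntegrableOn (fun u => exp (-p * u) * |sin u|) (Ioi 0) := by
    have hcont : Continuous fun u => exp (-p * u) * |sin u| := by fun_prop
    refine (exp_neg_integrableOn_Ioi 0 hp).mono' hcont.aestronglyMeasurable
      (Filter.Eventually.of_forall fun u => ?_)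
    rw [norm_mul, norm_of_nonneg (exp_pos _).le, norm_abs_eq_norm]
    exact mul_le_of_le_one_right (exp_pos _).le (abs_sin_le_one u)
  have hshift : ∀ u,
      exp (-p * (u + π)) * |sin (u + π)| = exp (-p * π) * (exp (-p * u) * |sin u|) := by
    intro u
    rw [sin_add_pi, abs_neg, ← mul_assoc, ← exp_add]
    ring_nf
  have hperiod :
      ∫ u in (0)..π, exp (-p * u) * |sin u| = ∫ u in (0)..π, exp (-p * u) * sin u := by
    refine intervalIntegral.integral_congr fun u hu => ?_
    rw [uIcc_of_le pi_pos.le] at hu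
    rw [abs_of_nonneg (sin_nonneg_of_nonneg_of_le_pi hu.1 hu.2)]
  rw [integral_Ioi_eq_div_of_add_eq_mul pi_pos.le hq.ne hf hshift, zero_add, hperiod,
    integral_exp_neg_mul_sin_zero_pi, realCoth_eq]
  ring_nf

theorem integral_Ioi_exp_mul_abs_sin_mul {a b : ℝ} (ha : a < 0) (hb : 0 < b) :
    ∫ s in Ioi 0, exp (a * s) * |sin (b * s)|
      = b / (a ^ 2 + b ^ 2) * realCoth (π * (-a / b) / 2) := by
  have hp : 0 < -a / b := div_pos (neg_pos.mpr ha) hb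
  calc ∫ s in Ioi 0, exp (a * s) * |sin (b * s)|
      = ∫ s in Ioi 0, exp (-(-a / b) * (b * s)) * |sin (b * s)| := by
        congr 1 with s
        field_simp
    _ = b⁻¹ * ∫ u in Ioi 0, exp (-(-a / b) * u) * |sin u| := by
        simpa only [mul_zero, smul_eq_mul] using integral_comp_mul_left_Ioi
          (fun u => exp (-(-a / b) * u) * |sin u|) 0 hb
    _ = b / (a ^ 2 + b ^ 2) * realCoth (π * (-a / b) / 2) := by
        rw [integral_Ioi_exp_neg_mul_abs_sin hp]
        field_simp

theorem stmt15 (r ψ : ℝ) (hr : 0 < r) (hψ : ψ ∈ Set.Ioo (π / 2) π) :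
    ∫ s in Set.Ioi (0 : ℝ),
        Real.exp (r * s * Real.cos ψ) * |Real.sin (r * s * Real.sin ψ)| / (r * Real.sin ψ)
      = (r ^ 2)⁻¹ * realCoth (π * |Real.cot ψ| / 2) := by
  have hsin : 0 < sin ψ := sin_pos_of_pos_of_lt_pi (by linarith [hψ.1, pi_pos]) hψ.2
  have hcos : cos ψ < 0 := cos_neg_of_pi_div_two_lt_of_lt hψ.1 (by linarith [hψ.2, pi_pos])
  have hcot : |cot ψ| = -(r * cos ψ) / (r * sin ψ) := by
    rw [cot_eq_cos_div_sin, abs_of_neg (div_neg_of_neg_of_pos hcos hsin)]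
    field_simp
  simp_rw [integral_div, mul_right_comm r _ (cos ψ), mul_right_comm r _ (sin ψ)]
  rw [integral_Ioi_exp_mul_abs_sin_mul (by nlinarith) (by positivity), hcot, mul_pow, mul_pow,
    ← mul_add, cos_sq_add_sin_sq]
  field_simp
end

section
/- For r > 0 and ψ ∈ (π/2,π) and τ ≥ 0: ∫₀^∞ e^{r(s+τ)cos ψ} sin(r(s+τ) sin ψ) · e^{r s cos ψ} sin(r s sin ψ)/(r sin ψ)² ds = (e^{rτ cos ψ}/(2 r³ sin 2ψ))·sin(rτ sin ψ − ψ). -/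
open MeasureTheory Filter Set Real
open scoped Topology

/-! With `a = r cos ψ < 0` and `b = r sin ψ`, the product-to-sum formula turns the integrand into
`e^{aτ}/2 · e^{2as} (cos bτ - cos (2bs + bτ))`, and both terms are integrated on `(0, ∞)` through
the primitive `e^{cs} (c cos (ds + φ) + d sin (ds + φ)) / (c² + d²)` of `e^{cs} cos (ds + φ)`. -/

theorem hasDerivAt_exp_mul_cos_primitive {a b : ℝ} (hab : a ^ 2 + b ^ 2 ≠ 0) (φ s : ℝ) :
    HasDerivAt
      (fun s => exp (a * s) * (a * cos (b * s + φ) + b * sin (b * s + φ)) / (a ^ 2 + b ^ 2))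
      (exp (a * s) * cos (b * s + φ)) s := by
  have hlin : ∀ c d : ℝ, HasDerivAt (fun s => c * s + d) c s := fun c d => by
    simpa using ((hasDerivAt_id s).const_mul c).add_const d
  have h := (((hlin a 0).exp).mul
    (((hlin b φ).cos.const_mul a).add ((hlin b φ).sin.const_mul b))).div_const (a ^ 2 + b ^ 2)
  simp only [add_zero] at h
  refine h.congr_deriv ?_
  simp only [Pi.add_apply]
  field_simp
  ring

theorem integrableOn_exp_mul_cos_Ioi {a : ℝ} (ha : a < 0) (b φ : ℝ) :
    IntegrableOn (fun s => exp (a * s) * cos (b * s + φ)) (Ioi 0) := by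
  refine (integrableOn_exp_mul_Ioi ha 0).mono' (by fun_prop) (Eventually.of_forall fun s => ?_)
  rw [norm_mul, norm_of_nonneg (exp_pos _).le]
  exact mul_le_of_le_one_right (exp_pos _).le (abs_cos_le_one _)

theorem integral_exp_mul_cos_Ioi {a : ℝ} (ha : a < 0) (b φ : ℝ) :
    ∫ s in Ioi 0, exp (a * s) * cos (b * s + φ) =
      -(a * cos φ + b * sin φ) / (a ^ 2 + b ^ 2) := by
  have hab : a ^ 2 + b ^ 2 ≠ 0 := by have := ha.ne; positivity
  have hderiv := hasDerivAt_exp_mul_cos_primitive hab φ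
  have hlim : Tendsto
      (fun s => exp (a * s) * (a * cos (b * s + φ) + b * sin (b * s + φ)) / (a ^ 2 + b ^ 2))
      atTop (𝓝 0) := by
    have hexp : Tendsto (fun s => exp (a * s)) atTop (𝓝 0) :=
      tendsto_exp_atBot.comp (tendsto_id.const_mul_atTop_of_neg ha)
    have hbdd : IsBoundedUnder (· ≤ ·) atTop
        (fun s => ‖a * cos (b * s + φ) + b * sin (b * s + φ)‖) :=
      isBoundedUnder_of ⟨|a| + |b|, fun s => by
        grw [norm_add_le, norm_mul, norm_mul, Real.norm_eq_abs (cos _), Real.norm_eq_abs (sin _),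
          abs_cos_le_one, abs_sin_le_one]
        simp⟩
    simpa using (hexp.zero_mul_isBoundedUnder_le hbdd).div_const (a ^ 2 + b ^ 2)
  rw [integral_Ioi_of_hasDerivAt_of_tendsto (hderiv 0).continuousAt.continuousWithinAt
    (fun s _ => hderiv s) (integrableOn_exp_mul_cos_Ioi ha b φ) hlim]
  simp only [mul_zero, exp_zero, zero_add, one_mul, zero_sub, neg_add_rev]
  ring

theorem integral_exp_mul_sin_mul_exp_mul_sin_Ioi {a : ℝ} (ha : a < 0) (b τ : ℝ) :
    ∫ s in Ioi 0, exp (a * (s + τ)) * sin (b * (s + τ)) * (exp (a * s) * sin (b * s)) =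
      exp (a * τ) * b * (a * sin (b * τ) - b * cos (b * τ)) / (4 * a * (a ^ 2 + b ^ 2)) := by
  have h2a : 2 * a < 0 := by linarith
  -- `0 * s + b * τ` puts the constant term in the shape of `integral_exp_mul_cos_Ioi`.
  have hprod : ∀ s, exp (a * (s + τ)) * sin (b * (s + τ)) * (exp (a * s) * sin (b * s)) =
      exp (a * τ) / 2 * (exp (2 * a * s) * cos (0 * s + b * τ) -
        exp (2 * a * s) * cos (2 * b * s + b * τ)) := by
    intro s
    have hsin := two_mul_sin_mul_sin (b * (s + τ)) (b * s)
    have hexp : exp (a * (s + τ)) * exp (a * s) = exp (a * τ) * exp (2 * a * s) := by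
      rw [← exp_add, ← exp_add]; ring_nf
    rw [show b * (s + τ) - b * s = 0 * s + b * τ by ring,
      show b * (s + τ) + b * s = 2 * b * s + b * τ by ring] at hsin
    linear_combination (exp (a * τ) / 2 * exp (2 * a * s)) * hsin
      + sin (b * (s + τ)) * sin (b * s) * hexp
  simp_rw [hprod]
  rw [integral_const_mul, integral_sub (integrableOn_exp_mul_cos_Ioi h2a 0 (b * τ))
    (integrableOn_exp_mul_cos_Ioi h2a (2 * b) (b * τ)), integral_exp_mul_cos_Ioi h2a,
    integral_exp_mul_cos_Ioi h2a]
  have : a ≠ 0 := ha.ne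
  field_simp
  ring

theorem stmt16_general (r ψ τ : ℝ) (hr : 0 < r) (hψ : ψ ∈ Set.Ioo (π / 2) π) :
    ∫ s in Set.Ioi (0 : ℝ),
        Real.exp (r * (s + τ) * Real.cos ψ) * Real.sin (r * (s + τ) * Real.sin ψ) *
          (Real.exp (r * s * Real.cos ψ) * Real.sin (r * s * Real.sin ψ)) /
            (r * Real.sin ψ) ^ 2
      = Real.exp (r * τ * Real.cos ψ) / (2 * r ^ 3 * Real.sin (2 * ψ)) *
          Real.sin (r * τ * Real.sin ψ - ψ) := by
  have hcos : cos ψ < 0 := cos_neg_of_pi_div_two_lt_of_lt hψ.1 (by linarith [hψ.2, pi_pos])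
  have hsin : 0 < sin ψ := sin_pos_of_pos_of_lt_pi (by linarith [hψ.1, pi_pos]) hψ.2
  simp_rw [integral_div, mul_right_comm r _ (cos ψ), mul_right_comm r _ (sin ψ),
    integral_exp_mul_sin_mul_exp_mul_sin_Ioi (mul_neg_of_pos_of_neg hr hcos), sin_two_mul, sin_sub]
  field_simp
  rw [cos_sq_add_sin_sq]
  ring

theorem stmt16 (r ψ τ : ℝ) (hr : 0 < r) (hψ : ψ ∈ Set.Ioo (π / 2) π) (hτ : 0 ≤ τ) :
    ∫ s in Set.Ioi (0 : ℝ),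
        Real.exp (r * (s + τ) * Real.cos ψ) * Real.sin (r * (s + τ) * Real.sin ψ) *
          (Real.exp (r * s * Real.cos ψ) * Real.sin (r * s * Real.sin ψ)) /
            (r * Real.sin ψ) ^ 2
      = Real.exp (r * τ * Real.cos ψ) / (2 * r ^ 3 * Real.sin (2 * ψ)) *
          Real.sin (r * τ * Real.sin ψ - ψ) :=
  stmt16_general r ψ τ hr hψ
end

section
/- For every a > 0 and x with |x| > a·e/2 > 0, the Lambert W values W₀(−a/(2|x|)) and W₋₁(−a/(2|x|)) satisfy W₀(−a/(2|x|)) − W₋₁(−a/(2|x|)) ≤ 2·log(2|x|/a), and moreover the set of s > 0 for which |x|·s·e^{−as/2} > 1 is exactly the open interval (−(2/a)W₀(−a/(2|x|)), −(2/a)W₋₁(−a/(2|x|))). -/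
/-!
Write `f w = w * exp w`, strictly decreasing on `(-∞, -1]` and strictly increasing on `[-1, ∞)`.
With `t = -a s / 2`, the inequality `|x| s e^{-as/2} > 1` reads `f t < -a / (2|x|) = f w₀ = f w₁`,
which by the two monotonicity statements means `w₁ < t < w₀`. For the bound, put
`L = log (2|x|/a) > 1`; then `f (-2L) = -2L e^{-2L} > -e^{-L} = f w₁` because `2L < e^L`, so
`w₁ > -2L`, while `w₀ < 0` since `f w₀ < 0`.
-/

open Real Set

lemma hasDerivAt_mul_exp (w : ℝ) :
    HasDerivAt (fun v : ℝ => v * exp v) ((w + 1) * exp w) w :=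
  ((hasDerivAt_id' w).mul (hasDerivAt_exp w)).congr_deriv (by ring)

lemma strictMonoOn_mul_exp : StrictMonoOn (fun w : ℝ => w * exp w) (Ici (-1)) := by
  refine strictMonoOn_of_hasDerivWithinAt_pos (convex_Ici _)
    (continuous_id.mul continuous_exp).continuousOn
    (fun w _ => (hasDerivAt_mul_exp w).hasDerivWithinAt) fun w hw => ?_
  rw [interior_Ici, mem_Ioi] at hw
  have : 0 < w + 1 := by linarith
  positivity

lemma strictAntiOn_mul_exp : StrictAntiOn (fun w : ℝ => w * exp w) (Iic (-1)) := by
  refine strictAntiOn_of_hasDerivWithinAt_neg (convex_Iic _)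
    (continuous_id.mul continuous_exp).continuousOn
    (fun w _ => (hasDerivAt_mul_exp w).hasDerivWithinAt) fun w hw => ?_
  rw [interior_Iic, mem_Iio] at hw
  exact mul_neg_of_neg_of_pos (by linarith) (exp_pos w)

lemma mul_exp_lt_iff {w₀ w₁ c : ℝ} (hw₀ : -1 ≤ w₀) (hw₁ : w₁ ≤ -1)
    (h₀ : w₀ * exp w₀ = c) (h₁ : w₁ * exp w₁ = c) (t : ℝ) :
    t * exp t < c ↔ t ∈ Ioo w₁ w₀ := by
  constructor
  · intro ht
    constructor
    · by_contra! htw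
      have := strictAntiOn_mul_exp.antitoneOn (show t ∈ Iic (-1) from htw.trans hw₁) hw₁ htw
      linarith
    · by_contra! htw
      have := strictMonoOn_mul_exp.monotoneOn hw₀ (show t ∈ Ici (-1) from hw₀.trans htw) htw
      linarith
  · rintro ⟨hwt, htw⟩
    rcases le_or_gt t (-1) with ht | ht
    · simpa only [h₁] using strictAntiOn_mul_exp hw₁ ht hwt
    · simpa only [h₀] using strictMonoOn_mul_exp (show t ∈ Ici (-1) from ht.le) hw₀ htw

lemma two_mul_lt_exp (x : ℝ) : 2 * x < exp x := by
  rcases le_or_gt x 0 with hx | hx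
  · linarith [exp_pos x]
  · have hex : x ≤ exp (x - 1) := by linarith [add_one_le_exp (x - 1)]
    have hsplit : exp x = exp 1 * exp (x - 1) := by rw [← exp_add]; ring_nf
    nlinarith [exp_one_gt_d9, exp_pos (x - 1)]

lemma neg_two_mul_lt_of_mul_exp_eq {L w : ℝ} (hL : 1 / 2 ≤ L) (hw : w ≤ -1)
    (h : w * exp w = -exp (-L)) : -(2 * L) < w := by
  have hval : -exp (-L) < -(2 * L) * exp (-(2 * L)) := by
    have hexp : exp (-(2 * L)) = exp (-L) * exp (-L) := by rw [← exp_add]; ring_nf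
    have : 2 * L * exp (-L) < 1 := by
      rw [exp_neg, ← div_eq_mul_inv, div_lt_one (exp_pos L)]
      exact two_mul_lt_exp L
    rw [hexp]
    nlinarith [exp_pos (-L)]
  by_contra! hwL
  have := strictAntiOn_mul_exp.antitoneOn hw (mem_Iic.2 (by linarith)) hwL
  linarith

lemma one_lt_mul_mul_exp_iff {a c : ℝ} (ha : 0 < a) (hc : 0 < c) (s : ℝ) :
    1 < c * s * exp (-a * s / 2) ↔ (-a * s / 2) * exp (-a * s / 2) < -a / (2 * c) := by
  rw [neg_div, ← neg_mul_eq_neg_mul, neg_div, neg_mul, neg_lt_neg_iff,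
    div_lt_iff₀ (by positivity)]
  constructor <;> intro h <;> nlinarith

lemma setOf_one_lt_mul_mul_exp {a c w₀ w₁ : ℝ} (ha : 0 < a) (hc : 0 < c)
    (hw₀ : -1 ≤ w₀) (hw₁ : w₁ ≤ -1)
    (h₀ : w₀ * exp w₀ = -a / (2 * c)) (h₁ : w₁ * exp w₁ = -a / (2 * c)) :
    {s : ℝ | 0 < s ∧ c * s * exp (-a * s / 2) > 1} = Ioo (-(2 / a) * w₀) (-(2 / a) * w₁) := by
  have hsub : {s : ℝ | 0 < s ∧ c * s * exp (-a * s / 2) > 1} =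
      (fun s => (-a / 2) * s) ⁻¹' Ioo w₁ w₀ := by
    ext s
    have hpos : c * s * exp (-a * s / 2) > 1 → 0 < s := by
      intro h
      by_contra! hs
      have := mul_nonpos_of_nonpos_of_nonneg (mul_nonpos_of_nonneg_of_nonpos hc.le hs)
        (exp_pos (-a * s / 2)).le
      linarith
    rw [mem_ofPred_eq, and_iff_right_of_imp hpos, gt_iff_lt, one_lt_mul_mul_exp_iff ha hc,
      mul_exp_lt_iff hw₀ hw₁ h₀ h₁, mem_preimage, neg_div, neg_mul, neg_div, neg_mul,
      mul_div_right_comm]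
  rw [hsub, preimage_const_mul_Ioo_of_neg _ _ (by linarith)]
  congr 1 <;> field_simp

theorem stmt19 (a x : ℝ) (ha : 0 < a) (hx : |x| > a * Real.exp 1 / 2)
    (w0 w1 : ℝ) (hw0 : -1 ≤ w0) (hw1 : w1 ≤ -1)
    (hW0 : w0 * Real.exp w0 = -a / (2 * |x|))
    (hW1 : w1 * Real.exp w1 = -a / (2 * |x|)) :
    w0 - w1 ≤ 2 * Real.log (2 * |x| / a)
      ∧ {s : ℝ | 0 < s ∧ |x| * s * Real.exp (-a * s / 2) > 1}
          = Set.Ioo (-(2 / a) * w0) (-(2 / a) * w1) := by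
  have hxpos : 0 < |x| := lt_trans (by positivity) hx
  set L := log (2 * |x| / a) with hL
  have hL1 : 1 < L := by
    rw [hL, lt_log_iff_exp_lt (by positivity), lt_div_iff₀ ha]
    linarith
  have hval : -a / (2 * |x|) = -exp (-L) := by
    rw [hL, exp_neg, exp_log (by positivity), inv_div, neg_div]
  have hw0neg : w0 < 0 :=
    neg_of_mul_neg_left (hW0.trans_lt (by rw [hval]; exact neg_neg_of_pos (exp_pos _)))
      (exp_pos w0).le
  have hw1L := neg_two_mul_lt_of_mul_exp_eq (by linarith) hw1 (hW1.trans hval)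
  exact ⟨by linarith, setOf_one_lt_mul_mul_exp ha hxpos hw0 hw1 hW0 hW1⟩
end
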